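/- For |y| = 1 with y ≠ 1, the equation xy = Ψ(x,y) has exactly one root x = X₀(y) with |x| < 1, where Ψ(x,y) = L(x,y)·[xy + y(1-x)·α₁â₂ + x(1-y)·α₂â₁] and Ψ is, for |x| ≤ 1, |y| ≤ 1, the probability generating function of a proper two-dimensional probability distribution. (Application of Rouché's theorem: |Ψ(x,y)| < 1 = |xy| on |x| = 1 when |y|=1, y≠1.) -/

import Mathlib

open Complex

/-!
Rouché's theorem is replaced by a fixed-point argument. The roots of `x y = Ψ(x, y)` in the disk
are the fixed points of `g x = Ψ(x, y) / y`. On the unit circle `|g| < 1`, so by the maximum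
modulus principle `g` maps the closed disk into a disk of radius `r < 1`. Conjugating `g` by disk
automorphisms and applying the Schwarz lemma shows that `g` contracts the pseudo-hyperbolic
distance `ρ(a, b) = |a - b| / |1 - conj a * b|` by the factor `2r / (1 + r²) < 1`. Hence `g` has at
most one fixed point, and its iterates starting at `0` converge to one, because the Euclidean
distance is at most `2ρ`.
-/

open ComplexConjugate Function Metric Set Filter

/-- The automorphism of the unit disk exchanging `a` and `0`; `‖diskMobius a z‖` is the
pseudo-hyperbolic distance between `a` and `z`. -/
noncomputable def diskMobius (a z : ℂ) : ℂ := (a - z) / (1 - conj a * z)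

theorem diskMobius_self (a : ℂ) : diskMobius a a = 0 := by simp [diskMobius]

theorem diskMobius_zero_right (a : ℂ) : diskMobius a 0 = a := by simp [diskMobius]

theorem norm_one_sub_conj_mul_le (a z : ℂ) : ‖1 - conj a * z‖ ≤ 1 + ‖a‖ * ‖z‖ := by
  simpa [norm_mul] using norm_sub_le (1 : ℂ) (conj a * z)

theorem one_sub_conj_mul_ne_zero {a z : ℂ} (ha : ‖a‖ < 1) (hz : ‖z‖ ≤ 1) :
    1 - conj a * z ≠ 0 := by
  intro h
  have h1 : ‖conj a * z‖ = 1 := by rw [← sub_eq_zero.1 h, norm_one]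
  rw [norm_mul, norm_conj] at h1
  nlinarith [norm_nonneg a, norm_nonneg z]

theorem norm_one_sub_conj_mul_sq_sub_norm_sub_sq (a z : ℂ) :
    ‖1 - conj a * z‖ ^ 2 - ‖a - z‖ ^ 2 = (1 - ‖a‖ ^ 2) * (1 - ‖z‖ ^ 2) := by
  simp only [Complex.sq_norm, normSq_apply, sub_re, sub_im, mul_re, mul_im, conj_re, conj_im,
    one_re, one_im]
  ring

theorem norm_diskMobius_lt_one {a z : ℂ} (ha : ‖a‖ < 1) (hz : ‖z‖ < 1) :
    ‖diskMobius a z‖ < 1 := by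
  have hD := norm_pos_iff.2 (one_sub_conj_mul_ne_zero ha hz.le)
  have hid := norm_one_sub_conj_mul_sq_sub_norm_sub_sq a z
  have hpos : 0 < (1 - ‖a‖ ^ 2) * (1 - ‖z‖ ^ 2) :=
    mul_pos (by nlinarith [norm_nonneg a]) (by nlinarith [norm_nonneg z])
  have hsq : ‖a - z‖ ^ 2 < ‖1 - conj a * z‖ ^ 2 := by linarith
  rw [diskMobius, norm_div, div_lt_one hD]
  exact lt_of_pow_lt_pow_left₀ 2 hD.le hsq

theorem norm_diskMobius_le {a z : ℂ} {r : ℝ} (hr : r < 1) (ha : ‖a‖ ≤ r) (hz : ‖z‖ ≤ r) :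
    ‖diskMobius a z‖ ≤ 2 * r / (1 + r ^ 2) := by
  have hr0 : 0 ≤ r := (norm_nonneg a).trans ha
  have hD := norm_pos_iff.2 (one_sub_conj_mul_ne_zero (ha.trans_lt hr) (hz.trans hr.le))
  have hid := norm_one_sub_conj_mul_sq_sub_norm_sub_sq a z
  have hDle : ‖1 - conj a * z‖ ≤ 1 + r ^ 2 := by
    nlinarith [norm_one_sub_conj_mul_le a z, norm_nonneg a, norm_nonneg z]
  have hprod : (1 - r ^ 2) ^ 2 ≤ (1 - ‖a‖ ^ 2) * (1 - ‖z‖ ^ 2) := by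
    rw [sq]
    gcongr
    · nlinarith
    · nlinarith [norm_nonneg a]
  have hsq : (‖a - z‖ * (1 + r ^ 2)) ^ 2 ≤ (2 * r * ‖1 - conj a * z‖) ^ 2 := by
    have hDsq : ‖1 - conj a * z‖ ^ 2 ≤ (1 + r ^ 2) ^ 2 := by gcongr
    nlinarith [mul_le_mul_of_nonneg_left hDsq (sq_nonneg (1 - r ^ 2))]
  rw [diskMobius, norm_div, div_le_div_iff₀ hD (by positivity)]
  exact (pow_le_pow_iff_left₀ (by positivity) (by positivity) two_ne_zero).1 hsq

theorem diskMobius_diskMobius {a z : ℂ} (ha : ‖a‖ < 1) (hz : ‖z‖ ≤ 1) :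
    diskMobius a (diskMobius a z) = z := by
  have hD := one_sub_conj_mul_ne_zero ha hz
  have haa := one_sub_conj_mul_ne_zero ha ha.le
  have hnum : a - (a - z) / (1 - conj a * z) = z * (1 - conj a * a) / (1 - conj a * z) := by
    rw [eq_div_iff hD, sub_mul, div_mul_cancel₀ _ hD]; ring
  have hden :
      1 - conj a * ((a - z) / (1 - conj a * z)) = (1 - conj a * a) / (1 - conj a * z) := by
    rw [eq_div_iff hD, sub_mul, mul_assoc, div_mul_cancel₀ _ hD]; ring
  rw [diskMobius, diskMobius, hnum, hden, div_div_div_cancel_right₀ hD,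
    mul_div_cancel_right₀ _ haa]

theorem differentiableAt_diskMobius {a z : ℂ} (h : 1 - conj a * z ≠ 0) :
    DifferentiableAt ℂ (diskMobius a) z := by
  unfold diskMobius
  fun_prop (disch := exact h)

theorem dist_le_two_mul_norm_diskMobius {a z : ℂ} (ha : ‖a‖ < 1) (hz : ‖z‖ ≤ 1) :
    dist a z ≤ 2 * ‖diskMobius a z‖ := by
  have hD := one_sub_conj_mul_ne_zero ha hz
  have hD2 : ‖1 - conj a * z‖ ≤ 2 := by
    nlinarith [norm_one_sub_conj_mul_le a z, norm_nonneg a, norm_nonneg z]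
  rw [dist_eq_norm, diskMobius, norm_div]
  calc ‖a - z‖ = ‖1 - conj a * z‖ * (‖a - z‖ / ‖1 - conj a * z‖) :=
        (mul_div_cancel₀ _ (norm_ne_zero_iff.2 hD)).symm
    _ ≤ 2 * (‖a - z‖ / ‖1 - conj a * z‖) := by gcongr

theorem two_mul_div_one_add_sq_lt_one {r : ℝ} (hr : r ≠ 1) : 2 * r / (1 + r ^ 2) < 1 := by
  rw [div_lt_one (by positivity)]
  nlinarith [sq_pos_of_ne_zero (sub_ne_zero.2 hr)]

section FixedPoint

variable {f : ℂ → ℂ} {r : ℝ}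

theorem norm_diskMobius_apply_le (hf : DifferentiableOn ℂ f (ball 0 1))
    (hfr : MapsTo f (ball 0 1) (closedBall 0 r)) (hr : r < 1) {a b : ℂ}
    (ha : a ∈ ball 0 1) (hb : b ∈ ball 0 1) :
    ‖diskMobius (f a) (f b)‖ ≤ 2 * r / (1 + r ^ 2) * ‖diskMobius a b‖ := by
  rw [mem_ball_zero_iff] at ha hb
  have hfa : ‖f a‖ ≤ r := mem_closedBall_zero_iff.1 (hfr (mem_ball_zero_iff.2 ha))
  have hmob : ∀ z ∈ ball (0 : ℂ) 1, diskMobius a z ∈ ball 0 1 := fun z hz =>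
    mem_ball_zero_iff.2 (norm_diskMobius_lt_one ha (mem_ball_zero_iff.1 hz))
  have hfmob : ∀ z ∈ ball (0 : ℂ) 1, ‖f (diskMobius a z)‖ ≤ r := fun z hz =>
    mem_closedBall_zero_iff.1 (hfr (hmob z hz))
  -- Conjugating by the disk automorphisms exchanging `a ↔ 0` and `f a ↔ 0` reduces to Schwarz.
  set H : ℂ → ℂ := fun z => diskMobius (f a) (f (diskMobius a z))
  have hH0 : H 0 = 0 := by simp only [H, diskMobius_zero_right, diskMobius_self]
  have hHd : DifferentiableOn ℂ H (ball 0 1) := fun z hz => by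
    have h1 := differentiableAt_diskMobius
      (one_sub_conj_mul_ne_zero ha (mem_ball_zero_iff.1 hz).le)
    have h2 := hf.differentiableAt (isOpen_ball.mem_nhds (hmob z hz))
    have h3 := differentiableAt_diskMobius
      (one_sub_conj_mul_ne_zero (hfa.trans_lt hr) ((hfmob z hz).trans hr.le))
    exact (h3.comp z (h2.comp z h1)).differentiableWithinAt
  have hHmaps : MapsTo H (ball 0 1) (closedBall (H 0) (2 * r / (1 + r ^ 2))) := fun z hz => by
    rw [hH0, mem_closedBall_zero_iff]
    exact norm_diskMobius_le hr hfa (hfmob z hz)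
  have := Complex.dist_le_div_mul_dist_of_mapsTo_ball hHd hHmaps (hmob b (mem_ball_zero_iff.2 hb))
  simpa only [H, hH0, dist_zero_right, div_one, diskMobius_diskMobius ha hb.le] using this

theorem eq_of_isFixedPt_of_mapsTo_closedBall (hf : DifferentiableOn ℂ f (ball 0 1))
    (hfr : MapsTo f (ball 0 1) (closedBall 0 r)) (hr : r < 1) {a b : ℂ}
    (ha : a ∈ ball 0 1) (hb : b ∈ ball 0 1) (hfa : IsFixedPt f a) (hfb : IsFixedPt f b) :
    a = b := by
  have hK : 2 * r / (1 + r ^ 2) < 1 := two_mul_div_one_add_sq_lt_one hr.ne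
  have hρ := norm_diskMobius_apply_le hf hfr hr ha hb
  rw [hfa, hfb] at hρ
  have hρ0 : ‖diskMobius a b‖ = 0 := by nlinarith [norm_nonneg (diskMobius a b)]
  have hdist :=
    dist_le_two_mul_norm_diskMobius (mem_ball_zero_iff.1 ha) (mem_ball_zero_iff.1 hb).le
  rw [hρ0, mul_zero] at hdist
  exact dist_le_zero.1 hdist

theorem exists_isFixedPt_of_mapsTo_closedBall
    (hf : DifferentiableOn ℂ f (ball 0 1)) (hfr : MapsTo f (ball 0 1) (closedBall 0 r))
    (hr : r < 1) : ∃ x ∈ ball (0 : ℂ) 1, IsFixedPt f x := by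
  set K := 2 * r / (1 + r ^ 2)
  have hr0 : 0 ≤ r :=
    (norm_nonneg _).trans (mem_closedBall_zero_iff.1 (hfr (mem_ball_self one_pos)))
  set x : ℕ → ℂ := fun n => f^[n] 0
  have hx_succ : ∀ n, x (n + 1) = f (x n) := fun n => iterate_succ_apply' f n 0
  have hx : ∀ n, x n ∈ closedBall 0 r := by
    intro n
    induction n with
    | zero => exact mem_closedBall_self hr0
    | succ n ih => rw [hx_succ]; exact hfr (closedBall_subset_ball hr ih)
  have hxb : ∀ n, ‖x n‖ < 1 := fun n => mem_ball_zero_iff.1 (closedBall_subset_ball hr (hx n))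
  have hρ : ∀ n, ‖diskMobius (x n) (x (n + 1))‖ ≤ ‖diskMobius (x 0) (x 1)‖ * K ^ n := by
    intro n
    induction n with
    | zero => simp
    | succ n ih =>
      calc _ ≤ K * ‖diskMobius (x n) (x (n + 1))‖ := by
            have := norm_diskMobius_apply_le hf hfr hr (mem_ball_zero_iff.2 (hxb n))
              (mem_ball_zero_iff.2 (hxb (n + 1)))
            rwa [← hx_succ, ← hx_succ] at this
        _ ≤ K * (‖diskMobius (x 0) (x 1)‖ * K ^ n) := by gcongr
        _ = _ := by ring
  have hdist : ∀ n, dist (x n) (x (n + 1)) ≤ 2 * ‖diskMobius (x 0) (x 1)‖ * K ^ n := fun n =>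
    (dist_le_two_mul_norm_diskMobius (hxb n) (hxb (n + 1)).le).trans
      (by rw [mul_assoc]; gcongr; exact hρ n)
  obtain ⟨l, hl⟩ := cauchySeq_tendsto_of_complete
    (cauchySeq_of_le_geometric K _ (two_mul_div_one_add_sq_lt_one hr.ne) hdist)
  have hlb : l ∈ ball 0 1 :=
    closedBall_subset_ball hr (isClosed_closedBall.mem_of_tendsto hl (Eventually.of_forall hx))
  exact ⟨l, hlb, isFixedPt_of_tendsto_iterate hl
    (hf.continuousOn.continuousAt (isOpen_ball.mem_nhds hlb))⟩

theorem existsUnique_isFixedPt_of_mapsTo_closedBall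
    (hf : DifferentiableOn ℂ f (ball 0 1)) (hfr : MapsTo f (ball 0 1) (closedBall 0 r))
    (hr : r < 1) : ∃! x, x ∈ ball (0 : ℂ) 1 ∧ IsFixedPt f x :=
  let ⟨x, hx, hfx⟩ := exists_isFixedPt_of_mapsTo_closedBall hf hfr hr
  ⟨x, ⟨hx, hfx⟩, fun _ ⟨hy, hfy⟩ => eq_of_isFixedPt_of_mapsTo_closedBall hf hfr hr hy hx hfy hfx⟩

end FixedPoint

theorem diffContOnCl_tsum_mul_pow_mul_pow {c : ℕ × ℕ → ℂ} (hc : Summable (‖c ·‖)) {y : ℂ}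
    (hy : ‖y‖ ≤ 1) :
    DiffContOnCl ℂ (fun x => ∑' p, c p * x ^ p.1 * y ^ p.2) (ball 0 1) := by
  have hbound : ∀ p, ∀ x ∈ closedBall (0 : ℂ) 1, ‖c p * x ^ p.1 * y ^ p.2‖ ≤ ‖c p‖ := by
    intro p x hx
    rw [mem_closedBall_zero_iff] at hx
    rw [norm_mul, norm_mul, norm_pow, norm_pow]
    calc _ ≤ ‖c p‖ * 1 * 1 := by gcongr <;> exact pow_le_one₀ (norm_nonneg _) ‹_›
      _ = ‖c p‖ := by ring
  exact .mk_ball (differentiableOn_tsum_of_summable_norm hc (fun p => by fun_prop) isOpen_ball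
    fun p x hx => hbound p x (ball_subset_closedBall hx))
    (continuousOn_tsum (fun p => by fun_prop) hc hbound)

theorem exists_lt_one_mapsTo_ball_closedBall {f : ℂ → ℂ} (hf : DiffContOnCl ℂ f (ball 0 1))
    (h : ∀ z ∈ sphere (0 : ℂ) 1, ‖f z‖ < 1) :
    ∃ r < 1, MapsTo f (ball 0 1) (closedBall 0 r) := by
  obtain ⟨z₀, hz₀, hmax⟩ := (isCompact_sphere (0 : ℂ) 1).exists_isMaxOn
    (NormedSpace.sphere_nonempty.2 zero_le_one)
    (continuous_norm.comp_continuousOn (hf.continuousOn_ball.mono sphere_subset_closedBall))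
  refine ⟨‖f z₀‖, h z₀ hz₀, fun z hz => mem_closedBall_zero_iff.2 ?_⟩
  refine Complex.norm_le_of_forall_mem_frontier_norm_le isBounded_ball hf (fun w hw => ?_)
    (subset_closure hz)
  rw [frontier_ball 0 one_ne_zero] at hw
  exact hmax hw

theorem stmt_3_general (w : ℕ × ℕ → ℝ)
    (hsum : Summable w)
    (Ψ : ℂ → ℂ → ℂ)
    (hΨ : ∀ x y : ℂ, ‖x‖ ≤ 1 → ‖y‖ ≤ 1 →
      Ψ x y = ∑' p : ℕ × ℕ, (w p : ℂ) * x ^ p.1 * y ^ p.2)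
    (hstrict : ∀ x y : ℂ, ‖x‖ = 1 → ‖y‖ = 1 → y ≠ 1 →
      ‖Ψ x y‖ < 1)
    (y : ℂ) (hy : ‖y‖ = 1) (hy1 : y ≠ 1) :
    ∃! x : ℂ, ‖x‖ < 1 ∧ x * y = Ψ x y := by
  have hy0 : y ≠ 0 := norm_ne_zero_iff.1 (hy ▸ one_ne_zero)
  have hΨy : ∀ x, ‖x‖ ≤ 1 → Ψ x y = ∑' p : ℕ × ℕ, (w p : ℂ) * x ^ p.1 * y ^ p.2 :=
    fun x hx => hΨ x y hx hy.le
  have hg : DiffContOnCl ℂ (fun x => y⁻¹ • ∑' p : ℕ × ℕ, (w p : ℂ) * x ^ p.1 * y ^ p.2)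
      (ball 0 1) :=
    (diffContOnCl_tsum_mul_pow_mul_pow (by simpa using hsum.abs) hy.le).const_smul y⁻¹
  obtain ⟨r, hr, hgr⟩ := exists_lt_one_mapsTo_ball_closedBall hg fun z hz => by
    have hz1 := mem_sphere_zero_iff_norm.1 hz
    simpa [hy, ← hΨy z hz1.le] using hstrict z y hz1 hy hy1
  refine (existsUnique_congr fun x => ?_).2
    (existsUnique_isFixedPt_of_mapsTo_closedBall hg.differentiableOn hgr hr)
  rw [mem_ball_zero_iff, IsFixedPt]
  refine and_congr_right fun hx => ?_
  rw [← hΨy x hx.le, smul_eq_mul, inv_mul_eq_iff_eq_mul₀ hy0, mul_comm, eq_comm]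

/-- For |y| = 1, y ≠ 1, the equation xy = Ψ(x,y) has exactly one root x with |x| < 1,
where Ψ is the probability generating function of a proper two-dimensional distribution
satisfying the strict inequality |Ψ(x,y)| < 1 on |x| = 1, |y| = 1, y ≠ 1
(Rouché's theorem). -/
theorem stmt_3 (w : ℕ × ℕ → ℝ)
    (hw : ∀ p, 0 ≤ w p) (hsum : Summable w) (htotal : ∑' p, w p = 1)
    (Ψ : ℂ → ℂ → ℂ)
    (hΨ : ∀ x y : ℂ, ‖x‖ ≤ 1 → ‖y‖ ≤ 1 →
      Ψ x y = ∑' p : ℕ × ℕ, (w p : ℂ) * x ^ p.1 * y ^ p.2)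
    (hstrict : ∀ x y : ℂ, ‖x‖ = 1 → ‖y‖ = 1 → y ≠ 1 →
      ‖Ψ x y‖ < 1)
    (y : ℂ) (hy : ‖y‖ = 1) (hy1 : y ≠ 1) :
    ∃! x : ℂ, ‖x‖ < 1 ∧ x * y = Ψ x y :=
  stmt_3_general w hsum Ψ hΨ hstrict y hy hy1
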